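/- Let θ ∈ (0, π/2) with θ ≠ π/4, ψ_θ = sin θ|00⟩ + cos θ|11⟩, t = tan θ, and define Ω_opt = α(θ)·(I₄ + Z⊗Z)/2 + (1−α(θ))·[I₄ − (1/(1+t)²)N], where α(θ) = (2 − sin 2θ)/(4 + sin 2θ) and N is the 4×4 matrix with diagonal (1, t, t, t²), entries −t in positions (0,3),(3,0), and zeros elsewhere (basis ordering |00⟩,|01⟩,|10⟩,|11⟩). Then: (i) Ω_opt is Hermitian with 0 ≤ Ω_opt ≤ I₄; (ii) Ω_opt ψ_θ = ψ_θ; and (iii) the supremum of ⟨φ, Ω_opt φ⟩ over unit vectors φ orthogonal to ψ_θ equals (2 + sin 2θ)/(4 + sin 2θ). -/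

import Mathlib

open Matrix Kronecker ComplexOrder

/-- The performance parameter `q(Ω, ψ)`: the supremum of `⟨φ, Ωφ⟩` over unit
vectors `φ` orthogonal to `ψ`. -/
noncomputable def qparam {n : Type*} [Fintype n] [DecidableEq n]
    (Ω : Matrix n n ℂ) (ψ : n → ℂ) : ℝ :=
  sSup {x : ℝ | ∃ φ : n → ℂ, star φ ⬝ᵥ φ = 1 ∧ star ψ ⬝ᵥ φ = 0 ∧
    x = (star φ ⬝ᵥ (Ω *ᵥ φ)).re}

/-- The state `ψ_θ = sin θ·|00⟩ + cos θ·|11⟩` in `ℂ²⊗ℂ²`. -/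
noncomputable def psiTheta (θ : ℝ) : Fin 2 × Fin 2 → ℂ :=
  fun p => if p = (0, 0) then (Real.sin θ : ℂ)
    else if p = (1, 1) then (Real.cos θ : ℂ) else 0

/-- Pauli Z. -/
def pauliZ : Matrix (Fin 2) (Fin 2) ℂ := !![1, 0; 0, -1]

/-- The matrix `N` with diagonal `(1, t, t, t²)`, entries `−t` in the `(|00⟩,|11⟩)` corners,
and zeros elsewhere. -/
noncomputable def Nmat (t : ℝ) : Matrix (Fin 2 × Fin 2) (Fin 2 × Fin 2) ℂ :=
  Matrix.of fun p q =>
    if p = (0, 0) ∧ q = (0, 0) then 1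
    else if p = (0, 1) ∧ q = (0, 1) then (t : ℂ)
    else if p = (1, 0) ∧ q = (1, 0) then (t : ℂ)
    else if p = (1, 1) ∧ q = (1, 1) then ((t ^ 2 : ℝ) : ℂ)
    else if (p = (0, 0) ∧ q = (1, 1)) ∨ (p = (1, 1) ∧ q = (0, 0)) then ((-t : ℝ) : ℂ)
    else 0

/-- The optimal two-qubit verification strategy
`Ω_opt = α(θ)·P⁺_{ZZ} + (1−α(θ))·(I − N/(1+t)²)` with `α(θ) = (2−sin 2θ)/(4+sin 2θ)`. -/
noncomputable def Ωopt (θ : ℝ) : Matrix (Fin 2 × Fin 2) (Fin 2 × Fin 2) ℂ :=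
  (((2 - Real.sin (2 * θ)) / (4 + Real.sin (2 * θ)) : ℝ) : ℂ) •
      ((1/2 : ℂ) • ((1 : Matrix (Fin 2 × Fin 2) (Fin 2 × Fin 2) ℂ) + pauliZ ⊗ₖ pauliZ))
    + ((1 - (2 - Real.sin (2 * θ)) / (4 + Real.sin (2 * θ)) : ℝ) : ℂ) •
      ((1 : Matrix (Fin 2 × Fin 2) (Fin 2 × Fin 2) ℂ)
        - ((1 / (1 + Real.tan θ) ^ 2 : ℝ) : ℂ) • Nmat (Real.tan θ))

/-!
For `0 < θ < π/2`, `Ω_opt` is the homogeneous strategy `p·I + (1 - p)·|ψ_θ⟩⟨ψ_θ|` with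
`p = (2 + sin 2θ)/(4 + sin 2θ)`: entrywise this only uses `tan θ · cos θ = sin θ` and
`sin² θ + cos² θ = 1`. For a homogeneous strategy everything is immediate: `ψ` is fixed, `Ω` acts
as `p` on `ψ^⊥`, and `I - Ω = (1 - p)(I - |ψ⟩⟨ψ|)` is a nonnegative multiple of a projection.
-/

section HomogeneousStrategy

variable {n : Type*} [Fintype n]

theorem vecMulVec_star_mulVec (ψ φ : n → ℂ) :
    vecMulVec ψ (star ψ) *ᵥ φ = (star ψ ⬝ᵥ φ) • ψ := by
  simp [vecMulVec_mulVec]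

theorem vecMulVec_star_mul_self {ψ : n → ℂ} (hψ : star ψ ⬝ᵥ ψ = 1) :
    vecMulVec ψ (star ψ) * vecMulVec ψ (star ψ) = vecMulVec ψ (star ψ) := by
  rw [vecMulVec_mul_vecMulVec, hψ, one_smul]

variable [DecidableEq n]

theorem posSemidef_one_sub_vecMulVec_star {ψ : n → ℂ} (hψ : star ψ ⬝ᵥ ψ = 1) :
    (1 - vecMulVec ψ (star ψ)).PosSemidef := by
  have hH : (1 - vecMulVec ψ (star ψ))ᴴ = 1 - vecMulVec ψ (star ψ) := by
    simp [conjTranspose_sub]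
  have hidem : (1 - vecMulVec ψ (star ψ)) * (1 - vecMulVec ψ (star ψ))
      = 1 - vecMulVec ψ (star ψ) := by
    rw [sub_mul, mul_sub, mul_sub, vecMulVec_star_mul_self hψ]
    simp
  have := posSemidef_conjTranspose_mul_self (1 - vecMulVec ψ (star ψ))
  rwa [hH, hidem] at this

def homogeneousStrategy (p : ℝ) (ψ : n → ℂ) : Matrix n n ℂ :=
  (p : ℂ) • 1 + ((1 - p : ℝ) : ℂ) • vecMulVec ψ (star ψ)

theorem homogeneousStrategy_mulVec_self (p : ℝ) {ψ : n → ℂ} (hψ : star ψ ⬝ᵥ ψ = 1) :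
    homogeneousStrategy p ψ *ᵥ ψ = ψ := by
  rw [homogeneousStrategy, add_mulVec, smul_mulVec, smul_mulVec, one_mulVec,
    vecMulVec_star_mulVec, hψ, one_smul, ← add_smul]
  simp

theorem homogeneousStrategy_mulVec_of_orthogonal (p : ℝ) {ψ φ : n → ℂ} (h : star ψ ⬝ᵥ φ = 0) :
    homogeneousStrategy p ψ *ᵥ φ = (p : ℂ) • φ := by
  rw [homogeneousStrategy, add_mulVec, smul_mulVec, smul_mulVec, one_mulVec,
    vecMulVec_star_mulVec, h]
  simp

theorem posSemidef_homogeneousStrategy {p : ℝ} (hp₀ : 0 ≤ p) (hp₁ : p ≤ 1) (ψ : n → ℂ) :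
    (homogeneousStrategy p ψ).PosSemidef := by
  rw [homogeneousStrategy]
  exact
    (PosSemidef.one.smul (Complex.zero_le_real.mpr hp₀)).add
      ((posSemidef_vecMulVec_self_star ψ).smul (Complex.zero_le_real.mpr (sub_nonneg.mpr hp₁)))

theorem posSemidef_one_sub_homogeneousStrategy {p : ℝ} (hp₁ : p ≤ 1) {ψ : n → ℂ}
    (hψ : star ψ ⬝ᵥ ψ = 1) : (1 - homogeneousStrategy p ψ).PosSemidef := by
  have h : 1 - homogeneousStrategy p ψ = ((1 - p : ℝ) : ℂ) • (1 - vecMulVec ψ (star ψ)) := by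
    simp only [homogeneousStrategy, smul_sub, sub_smul, one_smul, Complex.ofReal_sub,
      Complex.ofReal_one]
    abel
  rw [h]
  exact (posSemidef_one_sub_vecMulVec_star hψ).smul (Complex.zero_le_real.mpr (sub_nonneg.mpr hp₁))

theorem qparam_homogeneousStrategy (p : ℝ) {ψ : n → ℂ}
    (h : ∃ φ : n → ℂ, star φ ⬝ᵥ φ = 1 ∧ star ψ ⬝ᵥ φ = 0) :
    qparam (homogeneousStrategy p ψ) ψ = p := by
  suffices {x : ℝ | ∃ φ : n → ℂ, star φ ⬝ᵥ φ = 1 ∧ star ψ ⬝ᵥ φ = 0 ∧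
      x = (star φ ⬝ᵥ (homogeneousStrategy p ψ *ᵥ φ)).re} = {p} by
    rw [qparam, this, csSup_singleton]
  ext x
  constructor
  · rintro ⟨φ, hφ, hφψ, rfl⟩
    simp [homogeneousStrategy_mulVec_of_orthogonal p hφψ, hφ]
  · intro hx
    rw [Set.mem_singleton_iff] at hx
    obtain ⟨φ, hφ, hφψ⟩ := h
    exact ⟨φ, hφ, hφψ, by simp [hx, homogeneousStrategy_mulVec_of_orthogonal p hφψ, hφ]⟩

end HomogeneousStrategy

theorem star_psiTheta_dotProduct_self (θ : ℝ) : star (psiTheta θ) ⬝ᵥ psiTheta θ = 1 := by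
  simp only [dotProduct, Pi.star_apply, psiTheta, Fin.isValue, RCLike.star_def, mul_ite, mul_zero,
    Fintype.sum_prod_type, Prod.mk.injEq, Fin.sum_univ_two, and_true, zero_ne_one, and_false,
    ↓reduceIte, one_ne_zero, Complex.conj_ofReal, add_zero, zero_add]
  norm_cast
  simpa only [sq] using Real.sin_sq_add_cos_sq θ

theorem star_psiTheta_dotProduct_single (θ : ℝ) :
    star (psiTheta θ) ⬝ᵥ Pi.single (0, 1) 1 = 0 := by
  simp [dotProduct_single, psiTheta]

theorem Ωopt_eq_homogeneousStrategy (θ : ℝ) (hc : Real.cos θ ≠ 0)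
    (hsc : Real.sin θ + Real.cos θ ≠ 0) :
    Ωopt θ = homogeneousStrategy ((2 + Real.sin (2 * θ)) / (4 + Real.sin (2 * θ))) (psiTheta θ) := by
  have hpyth := Real.sin_sq_add_cos_sq θ
  unfold Ωopt homogeneousStrategy psiTheta
  rw [Real.sin_two_mul, Real.tan_eq_sin_div_cos]
  generalize Real.sin θ = s, Real.cos θ = c at *
  have hden : 4 + 2 * s * c ≠ 0 := by nlinarith [sq_nonneg (s + c)]
  have hα : 1 - (2 - 2 * s * c) / (4 + 2 * s * c)
      = (2 + 2 * s * c) / (4 + 2 * s * c) + (1 - (2 + 2 * s * c) / (4 + 2 * s * c)) * (s * c) := by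
    field_simp; ring
  have hβ : (1 - (2 - 2 * s * c) / (4 + 2 * s * c)) * (1 / (1 + s / c) ^ 2)
      = (1 - (2 + 2 * s * c) / (4 + 2 * s * c)) * c ^ 2 := by
    have : c + s ≠ 0 := by rwa [add_comm]
    field_simp
    linear_combination (-2) * hpyth
  have ht : s / c * c = s := div_mul_cancel₀ s hc
  -- with the coefficients abstracted, `simp` cannot rewrite real casts into `Complex.sin` etc.
  generalize (2 - 2 * s * c) / (4 + 2 * s * c) = a at *
  generalize (2 + 2 * s * c) / (4 + 2 * s * c) = p at *
  generalize 1 / (1 + s / c) ^ 2 = r at *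
  generalize s / c = t at *
  replace hα := congrArg Complex.ofReal hα
  replace hβ := congrArg Complex.ofReal hβ
  replace ht := congrArg Complex.ofReal ht
  replace hpyth := congrArg Complex.ofReal hpyth
  push_cast at hα hβ ht hpyth
  ext ⟨i, j⟩ ⟨k, l⟩
  fin_cases i <;> fin_cases j <;> fin_cases k <;> fin_cases l <;>
    simp [Nmat, pauliZ, vecMulVec_apply, kroneckerMap_apply, Prod.ext_iff] <;> grind

theorem stmt_15_general (θ : ℝ) (hθ : θ ∈ Set.Ioo 0 (Real.pi / 2)) :
    (Ωopt θ).IsHermitian ∧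
    (Ωopt θ).PosSemidef ∧
    ((1 : Matrix (Fin 2 × Fin 2) (Fin 2 × Fin 2) ℂ) - Ωopt θ).PosSemidef ∧
    Ωopt θ *ᵥ psiTheta θ = psiTheta θ ∧
    qparam (Ωopt θ) (psiTheta θ) = (2 + Real.sin (2 * θ)) / (4 + Real.sin (2 * θ)) := by
  have hs : 0 < Real.sin θ :=
    Real.sin_pos_of_pos_of_lt_pi hθ.1 (by linarith [Real.pi_pos, hθ.2])
  have hc : 0 < Real.cos θ := Real.cos_pos_of_mem_Ioo ⟨by linarith [hθ.1, Real.pi_pos], hθ.2⟩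
  have h2 := Real.neg_one_le_sin (2 * θ)
  have hp₀ : 0 ≤ (2 + Real.sin (2 * θ)) / (4 + Real.sin (2 * θ)) :=
    div_nonneg (by linarith) (by linarith)
  have hp₁ : (2 + Real.sin (2 * θ)) / (4 + Real.sin (2 * θ)) ≤ 1 :=
    (div_le_one (by linarith)).mpr (by linarith)
  have hψ := star_psiTheta_dotProduct_self θ
  rw [Ωopt_eq_homogeneousStrategy θ hc.ne' (by linarith)]
  exact ⟨(posSemidef_homogeneousStrategy hp₀ hp₁ _).isHermitian,
    posSemidef_homogeneousStrategy hp₀ hp₁ _,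
    posSemidef_one_sub_homogeneousStrategy hp₁ hψ,
    homogeneousStrategy_mulVec_self _ hψ,
    qparam_homogeneousStrategy _ ⟨_, by simp, star_psiTheta_dotProduct_single θ⟩⟩

theorem stmt_15 (θ : ℝ) (hθ : θ ∈ Set.Ioo 0 (Real.pi / 2)) (hθ4 : θ ≠ Real.pi / 4) :
    (Ωopt θ).IsHermitian ∧
    (Ωopt θ).PosSemidef ∧
    ((1 : Matrix (Fin 2 × Fin 2) (Fin 2 × Fin 2) ℂ) - Ωopt θ).PosSemidef ∧
    Ωopt θ *ᵥ psiTheta θ = psiTheta θ ∧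
    qparam (Ωopt θ) (psiTheta θ) = (2 + Real.sin (2 * θ)) / (4 + Real.sin (2 * θ)) :=
  stmt_15_general θ hθ
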